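/- Let Φ be a Young function in ∇₂ and 0 < q < ∞. Then there is a constant C such that for every r > 0, ∫_r^∞ [ (1/t)·Φ⁻¹(1/t)^{-1} ]^q dt/t ≤ C·r^{-q}·∫₀^r Φ⁻¹(1/t)^{-q} dt/t. -/

import Mathlib

open MeasureTheory ENNReal NNReal

noncomputable section

/-- A Young function `Φ : [0,∞] → [0,∞]`: increasing, convex, `Φ(0)=0`, `Φ(∞)=∞`,
`lim_{t→0}Φ(t)=0`, with `a(Φ)<∞` and `b(Φ)>0`. -/
structure YoungFunction (Φ : ℝ≥0∞ → ℝ≥0∞) : Prop where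
  mono : Monotone Φ
  map_zero : Φ 0 = 0
  map_top : Φ ⊤ = ⊤
  convex : ∀ (a b : ℝ≥0) (x y : ℝ≥0∞), a + b = 1 →
    Φ ((a : ℝ≥0∞) * x + (b : ℝ≥0∞) * y) ≤ (a : ℝ≥0∞) * Φ x + (b : ℝ≥0∞) * Φ y
  tendsto_zero : Filter.Tendsto Φ (nhdsWithin 0 (Set.Ioi 0)) (nhds 0)
  exists_pos : ∃ t : ℝ≥0∞, t ≠ ⊤ ∧ 0 < Φ t
  exists_finite : ∃ t : ℝ≥0∞, 0 < t ∧ Φ t < ⊤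

/-- The generalized inverse `Φ⁻¹(u) = inf{t ≥ 0 : Φ(t) > u}` (with `inf ∅ = ∞`,
so `Φ⁻¹(∞) = ∞`). -/
def yinv (Φ : ℝ≥0∞ → ℝ≥0∞) (u : ℝ≥0∞) : ℝ≥0∞ := sInf {t | u < Φ t}

/-! Write `g(t) = Φ⁻¹(1/t)⁻¹`. The `∇₂` condition gives `Φ⁻¹(2k u) ≤ k Φ⁻¹(u)`, so the increasing
function `g` satisfies `g(2k t) ≤ k g(t)`. Iterating, `g(t) ≤ k (t/r)^θ g(r)` for `t ≥ r`, where
`θ = log_{2k} k < 1`; hence the tail integral `∫_r^∞ (g(t)/t)^q dt/t` is at most a constant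
times `r^{-q} g(r)^q`. Conversely
`∫_{r/2k}^r g(t)^q dt/t ≥ (1 - 1/2k) g(r/2k)^q ≥ (1 - 1/2k) k^{-q} g(r)^q`. -/

open Set

def ArinoMuckenhoupt (g : ℝ → ℝ≥0∞) (q : ℝ) : Prop :=
  ∃ C : ℝ≥0∞, C ≠ ⊤ ∧ ∀ r : ℝ, 0 < r →
    (∫⁻ t in Ioi r, ((ENNReal.ofReal t)⁻¹ * g t) ^ q * (ENNReal.ofReal t)⁻¹) ≤
      C * (ENNReal.ofReal r)⁻¹ ^ q * ∫⁻ t in Ioo (0 : ℝ) r, g t ^ q * (ENNReal.ofReal t)⁻¹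

lemma ofReal_inv_rpow {r : ℝ} (hr : 0 < r) (q : ℝ) :
    (ENNReal.ofReal r)⁻¹ ^ q = ENNReal.ofReal (r ^ (-q)) := by
  rw [← ENNReal.ofReal_inv_of_pos hr, ENNReal.ofReal_rpow_of_pos (inv_pos.mpr hr),
    Real.inv_rpow hr.le, Real.rpow_neg hr.le]

lemma lintegral_Ioi_ofReal_rpow {e : ℝ} (he : e < -1) {r : ℝ} (hr : 0 < r) :
    ∫⁻ t in Ioi r, ENNReal.ofReal (t ^ e) = ENNReal.ofReal (-r ^ (e + 1) / (e + 1)) := by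
  rw [← ofReal_integral_eq_lintegral_ofReal (integrableOn_Ioi_rpow_of_lt he hr),
    integral_Ioi_rpow_of_lt he hr]
  filter_upwards [ae_restrict_mem measurableSet_Ioi] with t ht
  exact Real.rpow_nonneg (hr.trans ht).le e

section Doubling

variable {g : ℝ → ℝ≥0∞} {c K : ℝ}

lemma le_pow_mul_of_doubling (hc : 0 < c)
    (hdoub : ∀ t, 0 < t → g (c * t) ≤ ENNReal.ofReal K * g t) (n : ℕ) {r : ℝ} (hr : 0 < r) :
    g (c ^ n * r) ≤ ENNReal.ofReal K ^ n * g r := by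
  induction n with
  | zero => simp
  | succ n ih =>
    calc g (c ^ (n + 1) * r) = g (c * (c ^ n * r)) := by ring_nf
      _ ≤ ENNReal.ofReal K * g (c ^ n * r) := hdoub _ (by positivity)
      _ ≤ ENNReal.ofReal K * (ENNReal.ofReal K ^ n * g r) := by gcongr
      _ = ENNReal.ofReal K ^ (n + 1) * g r := by ring

lemma le_mul_rpow_of_doubling (hg : Monotone g) (hc : 1 < c) (hK : 1 ≤ K)
    (hdoub : ∀ t, 0 < t → g (c * t) ≤ ENNReal.ofReal K * g t) {r t : ℝ} (hr : 0 < r)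
    (hrt : r ≤ t) :
    g t ≤ ENNReal.ofReal (K * (t / r) ^ Real.logb c K) * g r := by
  have htr : 0 < t / r := div_pos (hr.trans_le hrt) hr
  set n := ⌊Real.logb c (t / r)⌋₊
  have hcn : c ^ n ≤ t / r := by
    rw [← Real.rpow_natCast, ← Real.le_logb_iff_rpow_le hc htr]
    exact Nat.floor_le (Real.logb_nonneg hc ((one_le_div hr).mpr hrt))
  have hcn' : t ≤ c ^ (n + 1) * r := by
    rw [← div_le_iff₀ hr, ← Real.rpow_natCast, ← Real.logb_le_iff_le_rpow hc htr]
    push_cast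
    exact (Nat.lt_floor_add_one _).le
  have hKn : K ^ n ≤ (t / r) ^ Real.logb c K := by
    calc K ^ n = (c ^ n) ^ Real.logb c K := by
          rw [← Real.rpow_natCast, ← Real.rpow_natCast, ← Real.rpow_mul (by positivity),
            mul_comm, Real.rpow_mul (by positivity), Real.rpow_logb (by positivity) hc.ne'
            (by positivity)]
      _ ≤ (t / r) ^ Real.logb c K :=
          Real.rpow_le_rpow (by positivity) hcn (Real.logb_nonneg hc hK)
  calc g t ≤ g (c ^ (n + 1) * r) := hg hcn'
    _ ≤ ENNReal.ofReal K ^ (n + 1) * g r := le_pow_mul_of_doubling (by positivity) hdoub _ hr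
    _ ≤ ENNReal.ofReal (K * (t / r) ^ Real.logb c K) * g r := by
        gcongr
        rw [← ENNReal.ofReal_pow (by positivity), pow_succ']
        gcongr


lemma lintegral_Ioi_le_of_doubling (hg : Monotone g) (hc : 1 < c) (hK : 1 ≤ K) (hKc : K < c)
    (hdoub : ∀ t, 0 < t → g (c * t) ≤ ENNReal.ofReal K * g t) {q : ℝ} (hq : 0 < q) {r : ℝ}
    (hr : 0 < r) :
    ∫⁻ t in Ioi r, ((ENNReal.ofReal t)⁻¹ * g t) ^ q * (ENNReal.ofReal t)⁻¹ ≤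
      ENNReal.ofReal (K ^ q / ((1 - Real.logb c K) * q)) * (ENNReal.ofReal r)⁻¹ ^ q *
        g r ^ q := by
  set θ := Real.logb c K
  have hθ : θ < 1 := by
    rw [Real.logb_lt_iff_lt_rpow hc (by linarith), Real.rpow_one]; exact hKc
  set e := θ * q - q - 1
  have he : e < -1 := by nlinarith
  have hpoint : ∀ t ∈ Ioi r, ((ENNReal.ofReal t)⁻¹ * g t) ^ q * (ENNReal.ofReal t)⁻¹ ≤
      ENNReal.ofReal (K ^ q * r ^ (-(θ * q))) * ENNReal.ofReal (t ^ e) * g r ^ q := by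
    intro t (ht : r < t)
    have ht0 : 0 < t := hr.trans ht
    have hreal : (t⁻¹ * (K * (t / r) ^ θ)) ^ q * t⁻¹ = K ^ q * r ^ (-(θ * q)) * t ^ e := by
      rw [Real.mul_rpow (by positivity) (by positivity),
        Real.mul_rpow (by positivity) (by positivity), ← Real.rpow_mul (by positivity),
        Real.div_rpow ht0.le hr.le, Real.inv_rpow ht0.le, ← Real.rpow_neg ht0.le,
        Real.rpow_neg hr.le, ← Real.rpow_neg_one t]
      have : t ^ e = t ^ (-q) * t ^ (θ * q) * t ^ (-1 : ℝ) := by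
        rw [← Real.rpow_add ht0, ← Real.rpow_add ht0]; congr 1; simp only [e]; ring
      rw [this]; ring
    calc ((ENNReal.ofReal t)⁻¹ * g t) ^ q * (ENNReal.ofReal t)⁻¹
        ≤ ((ENNReal.ofReal t)⁻¹ * (ENNReal.ofReal (K * (t / r) ^ θ) * g r)) ^ q *
            (ENNReal.ofReal t)⁻¹ := by
          gcongr; exact le_mul_rpow_of_doubling hg hc hK hdoub hr ht.le
      _ = ENNReal.ofReal ((t⁻¹ * (K * (t / r) ^ θ)) ^ q * t⁻¹) * g r ^ q := by
          rw [← ENNReal.ofReal_inv_of_pos ht0, ← mul_assoc, ENNReal.mul_rpow_of_nonneg _ _ hq.le,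
            ← ENNReal.ofReal_mul (by positivity),
            ENNReal.ofReal_rpow_of_nonneg (by positivity) hq.le,
            mul_right_comm, ← ENNReal.ofReal_mul (by positivity)]
      _ = _ := by rw [hreal, ENNReal.ofReal_mul (by positivity)]
  calc ∫⁻ t in Ioi r, ((ENNReal.ofReal t)⁻¹ * g t) ^ q * (ENNReal.ofReal t)⁻¹
      ≤ ∫⁻ t in Ioi r, ENNReal.ofReal (K ^ q * r ^ (-(θ * q))) * ENNReal.ofReal (t ^ e) *
          g r ^ q := setLIntegral_mono' measurableSet_Ioi hpoint
    _ = ENNReal.ofReal (K ^ q * r ^ (-(θ * q))) * ENNReal.ofReal (-r ^ (e + 1) / (e + 1)) *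
          g r ^ q := by
        rw [lintegral_mul_const _ (by fun_prop), lintegral_const_mul _ (by fun_prop),
          lintegral_Ioi_ofReal_rpow he hr]
    _ = _ := by
        rw [← ENNReal.ofReal_mul (by positivity), ofReal_inv_rpow hr,
          ← ENNReal.ofReal_mul (by positivity)]
        congr 2
        have he1 : e + 1 = -((1 - θ) * q) := by simp only [e]; ring
        have hrq : r ^ q = r ^ (θ * q) * r ^ ((1 - θ) * q) := by
          rw [← Real.rpow_add hr]; ring_nf
        rw [he1, Real.rpow_neg hr.le, Real.rpow_neg hr.le, Real.rpow_neg hr.le, hrq]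
        field_simp

lemma le_lintegral_Ioo_of_doubling (hg : Monotone g) (hc : 1 < c)
    (hdoub : ∀ t, 0 < t → g (c * t) ≤ ENNReal.ofReal K * g t) {q : ℝ} (hq : 0 ≤ q) {r : ℝ}
    (hr : 0 < r) :
    ENNReal.ofReal (1 - c⁻¹) * g r ^ q ≤
      ENNReal.ofReal K ^ q * ∫⁻ t in Ioo (0 : ℝ) r, g t ^ q * (ENNReal.ofReal t)⁻¹ := by
  have hrc : 0 < r / c := by positivity
  have hgr : g r ^ q ≤ ENNReal.ofReal K ^ q * g (r / c) ^ q := by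
    rw [← ENNReal.mul_rpow_of_nonneg _ _ hq]
    gcongr
    simpa [mul_div_cancel₀ _ (zero_lt_one.trans hc).ne'] using hdoub _ hrc
  have hvol : ENNReal.ofReal (1 - c⁻¹) = (ENNReal.ofReal r)⁻¹ * volume (Ioo (r / c) r) := by
    rw [Real.volume_Ioo, ← ENNReal.ofReal_inv_of_pos hr, ← ENNReal.ofReal_mul (by positivity)]
    congr 1; field_simp
  calc ENNReal.ofReal (1 - c⁻¹) * g r ^ q
      ≤ ENNReal.ofReal (1 - c⁻¹) * (ENNReal.ofReal K ^ q * g (r / c) ^ q) := by gcongr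
    _ = ENNReal.ofReal K ^ q * ∫⁻ _ in Ioo (r / c) r, g (r / c) ^ q * (ENNReal.ofReal r)⁻¹ := by
        rw [setLIntegral_const, hvol]; ring
    _ ≤ ENNReal.ofReal K ^ q * ∫⁻ t in Ioo (r / c) r, g t ^ q * (ENNReal.ofReal t)⁻¹ := by
        gcongr _ * ?_
        refine setLIntegral_mono' measurableSet_Ioo fun t ht => ?_
        gcongr
        · exact hg ht.1.le
        · exact ht.2.le
    _ ≤ ENNReal.ofReal K ^ q * ∫⁻ t in Ioo (0 : ℝ) r, g t ^ q * (ENNReal.ofReal t)⁻¹ := by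
        gcongr _ * ?_
        exact lintegral_mono_set (Ioo_subset_Ioo_left hrc.le)

theorem arinoMuckenhoupt_of_doubling (hg : Monotone g) (hc : 1 < c) (hK : 1 ≤ K) (hKc : K < c)
    (hdoub : ∀ t, 0 < t → g (c * t) ≤ ENNReal.ofReal K * g t) {q : ℝ} (hq : 0 < q) :
    ArinoMuckenhoupt g q := by
  set A := ENNReal.ofReal (K ^ q / ((1 - Real.logb c K) * q))
  set B := ENNReal.ofReal (1 - c⁻¹)
  have hB : B ≠ 0 := by
    simpa [B] using inv_lt_one_of_one_lt₀ hc
  refine ⟨A * B⁻¹ * ENNReal.ofReal K ^ q, by finiteness, fun r hr => ?_⟩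
  calc ∫⁻ t in Ioi r, ((ENNReal.ofReal t)⁻¹ * g t) ^ q * (ENNReal.ofReal t)⁻¹
      ≤ A * (ENNReal.ofReal r)⁻¹ ^ q * g r ^ q :=
        lintegral_Ioi_le_of_doubling hg hc hK hKc hdoub hq hr
    _ = A * B⁻¹ * (ENNReal.ofReal r)⁻¹ ^ q * (B * g r ^ q) := by
        rw [show A * B⁻¹ * (ENNReal.ofReal r)⁻¹ ^ q * (B * g r ^ q) =
          B⁻¹ * B * (A * (ENNReal.ofReal r)⁻¹ ^ q * g r ^ q) by ring,
          ENNReal.inv_mul_cancel hB ENNReal.ofReal_ne_top, one_mul]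
    _ ≤ A * B⁻¹ * (ENNReal.ofReal r)⁻¹ ^ q *
          (ENNReal.ofReal K ^ q * ∫⁻ t in Ioo (0 : ℝ) r, g t ^ q * (ENNReal.ofReal t)⁻¹) := by
        gcongr _ * ?_
        exact le_lintegral_Ioo_of_doubling hg hc hdoub hq.le hr
    _ = _ := by ring

end Doubling

section Nabla

variable {Φ : ℝ≥0∞ → ℝ≥0∞} {k : ℝ≥0}

lemma yinv_mono (Φ : ℝ≥0∞ → ℝ≥0∞) : Monotone (yinv Φ) :=
  fun _ _ huv => sInf_le_sInf fun _ ht => huv.trans_lt ht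

lemma yinv_two_mul_le (hk : k ≠ 0)
    (hΔ : ∀ r : ℝ≥0∞, Φ r ≤ (1 / (2 * (k : ℝ≥0∞))) * Φ ((k : ℝ≥0∞) * r)) (u : ℝ≥0∞) :
    yinv Φ (2 * k * u) ≤ k * yinv Φ u := by
  have h2k : (2 * k : ℝ≥0∞) ≠ 0 := by simpa using hk
  rw [mul_comm (k : ℝ≥0∞),
    ← ENNReal.div_le_iff_le_mul (Or.inl (by simpa using hk)) (Or.inl coe_ne_top)]
  refine le_sInf fun t (ht : u < Φ t) => ENNReal.div_le_of_le_mul (sInf_le ?_)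
  calc 2 * k * u < 2 * k * Φ t := ENNReal.mul_lt_mul_right h2k (by finiteness) ht
    _ ≤ Φ (t * k) := by
      rw [mul_comm t, ENNReal.mul_le_iff_le_inv h2k (by finiteness), ← one_div]
      exact hΔ t

lemma monotone_inv_yinv_inv_ofReal (Φ : ℝ≥0∞ → ℝ≥0∞) :
    Monotone fun t : ℝ => (yinv Φ (ENNReal.ofReal t)⁻¹)⁻¹ :=
  fun _ _ hab => ENNReal.inv_le_inv.mpr
    (yinv_mono Φ (ENNReal.inv_le_inv.mpr (ENNReal.ofReal_le_ofReal hab)))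

lemma inv_yinv_inv_ofReal_two_mul_le (hk : k ≠ 0)
    (hΔ : ∀ r : ℝ≥0∞, Φ r ≤ (1 / (2 * (k : ℝ≥0∞))) * Φ ((k : ℝ≥0∞) * r)) (t : ℝ) :
    (yinv Φ (ENNReal.ofReal (2 * k * t))⁻¹)⁻¹ ≤
      ENNReal.ofReal k * (yinv Φ (ENNReal.ofReal t)⁻¹)⁻¹ := by
  have h2k : (2 * k : ℝ≥0∞) ≠ 0 := by simpa using hk
  set s := ENNReal.ofReal t
  have hs : ENNReal.ofReal (2 * k * t) = 2 * k * s := by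
    rw [ENNReal.ofReal_mul (by positivity), ENNReal.ofReal_mul zero_le_two]; simp [s]
  have key : yinv Φ s⁻¹ ≤ k * yinv Φ (2 * k * s)⁻¹ := by
    calc yinv Φ s⁻¹ = yinv Φ (2 * k * (2 * k * s)⁻¹) := by
          rw [ENNReal.mul_inv (Or.inl h2k) (Or.inl (by finiteness)), ← mul_assoc,
            ENNReal.mul_inv_cancel h2k (by finiteness), one_mul]
      _ ≤ k * yinv Φ (2 * k * s)⁻¹ := yinv_two_mul_le hk hΔ _
  rw [hs, ENNReal.ofReal_coe_nnreal, ← ENNReal.inv_mul_le_iff (by simpa using hk) (by simp),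
    ← ENNReal.mul_inv (Or.inl (by simpa using hk)) (Or.inl (by simp))]
  exact ENNReal.inv_le_inv.mpr key

end Nabla

theorem stmt14_general (Φ : ℝ≥0∞ → ℝ≥0∞)
    (hnabla : ∃ k : ℝ≥0, 1 < k ∧
      ∀ r : ℝ≥0∞, Φ r ≤ (1 / (2 * (k : ℝ≥0∞))) * Φ ((k : ℝ≥0∞) * r))
    (q : ℝ) (hq : 0 < q) :
    ∃ C : ℝ≥0∞, C ≠ ⊤ ∧ ∀ r : ℝ, 0 < r →
      (∫⁻ t in Set.Ioi r,
          ((ENNReal.ofReal t)⁻¹ * (yinv Φ (ENNReal.ofReal t)⁻¹)⁻¹) ^ q *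
            (ENNReal.ofReal t)⁻¹) ≤
        C * (ENNReal.ofReal r)⁻¹ ^ q *
          ∫⁻ t in Set.Ioo (0 : ℝ) r,
            (yinv Φ (ENNReal.ofReal t)⁻¹)⁻¹ ^ q * (ENNReal.ofReal t)⁻¹ := by
  obtain ⟨k, hk, hΔ⟩ := hnabla
  have hk' : (1 : ℝ) < k := hk
  exact arinoMuckenhoupt_of_doubling (c := 2 * k) (K := k) (monotone_inv_yinv_inv_ofReal Φ)
    (by linarith) hk'.le (by linarith)
    (fun t _ => inv_yinv_inv_ofReal_two_mul_le (zero_lt_one.trans hk).ne' hΔ t) hq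

/-- if `Φ ∈ ∇₂` and `0 < q < ∞`, then the Arino-Muckenhoupt condition
holds for `φ(t) = Φ⁻¹(1/t)⁻¹`. -/
theorem stmt14 (Φ : ℝ≥0∞ → ℝ≥0∞) (hΦ : YoungFunction Φ)
    (hnabla : ∃ k : ℝ≥0, 1 < k ∧
      ∀ r : ℝ≥0∞, Φ r ≤ (1 / (2 * (k : ℝ≥0∞))) * Φ ((k : ℝ≥0∞) * r))
    (q : ℝ) (hq : 0 < q) :
    ∃ C : ℝ≥0∞, C ≠ ⊤ ∧ ∀ r : ℝ, 0 < r →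
      (∫⁻ t in Set.Ioi r,
          ((ENNReal.ofReal t)⁻¹ * (yinv Φ (ENNReal.ofReal t)⁻¹)⁻¹) ^ q *
            (ENNReal.ofReal t)⁻¹) ≤
        C * (ENNReal.ofReal r)⁻¹ ^ q *
          ∫⁻ t in Set.Ioo (0 : ℝ) r,
            (yinv Φ (ENNReal.ofReal t)⁻¹)⁻¹ ^ q * (ENNReal.ofReal t)⁻¹ :=
  stmt14_general Φ hnabla q hq
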